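/- arXiv:1904.02789 — 3 statements merged into one kernel-verified Lean document; each statement's English description precedes it below -/
import Mathlib

section
/- Suppose the Apollonius circle {z : ‖z − x_E‖ = α‖z − x_P‖} intersects the x-axis in exactly the two points (c₁, 0) and (c₂, 0) with c₁ < c₂. Then the function G₁(x_p) = ‖(x_p,0) − x_P‖ − ‖(x_p,0) − x_E‖/α satisfies: G₁(c₁) = G₁(c₂) = 0, G₁(x_p) > 0 for x_p ∈ (c₁, c₂), and G₁(x_p) < 0 for x_p ∈ (−∞, c₁) ∪ (c₂, +∞). -/
/-!
Squaring turns the sign of `G₁ x` into the sign of the power difference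
`α² ‖(x,0) - x_P‖² - ‖(x,0) - x_E‖²`, a quadratic in `x` with leading coefficient `α² - 1 < 0`.
Its two roots are the abscissae `c₁ < c₂` where the Apollonius circle meets the axis, so it equals
`(1 - α²)(x - c₁)(c₂ - x)`, which vanishes at `c₁, c₂`, is positive between them and negative outside.
-/

noncomputable abbrev E2 := EuclideanSpace ℝ (Fin 2)

noncomputable def pt (x y : ℝ) : E2 := WithLp.toLp 2 ![x, y]

lemma norm_pt_sub_sq (x : ℝ) (w : E2) : ‖pt x 0 - w‖ ^ 2 = (x - w 0) ^ 2 + w 1 ^ 2 := by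
  rw [EuclideanSpace.norm_eq, Real.sq_sqrt (by positivity)]
  simp [pt, Fin.sum_univ_two]

lemma sign_sub_div_eq_sign_sq_sub_sq {K : Type*} [Field K] [LinearOrder K] [IsStrictOrderedRing K]
    {α u v : K} (hα : 0 < α) (hu : 0 ≤ u) (hv : 0 ≤ v) :
    SignType.sign (u - v / α) = SignType.sign (α ^ 2 * u ^ 2 - v ^ 2) := by
  have hdiv : u - v / α = (α * u - v) * α⁻¹ := by field_simp
  have hsq : α ^ 2 * u ^ 2 - v ^ 2 = (α * u - v) * (α * u + v) := by ring
  rw [hdiv, hsq, sign_mul, sign_pos (inv_pos.2 hα), mul_one, sign_mul]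
  rcases (add_nonneg (mul_nonneg hα.le hu) hv).eq_or_lt with h | h
  · have hαu : α * u = 0 := by linarith [mul_nonneg hα.le hu]
    have hv0 : v = 0 := by linarith
    simp [hαu, hv0]
  · rw [sign_pos h, mul_one]

lemma quadratic_eq_mul_sub_mul_sub {K : Type*} [Field K] {a b c r s : K} (hrs : r ≠ s)
    (hr : a * r * r + b * r + c = 0) (hs : a * s * s + b * s + c = 0) (x : K) :
    a * x * x + b * x + c = a * (x - r) * (x - s) := by
  have key : (s - r) * (a * x * x + b * x + c - a * (x - r) * (x - s)) = 0 := by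
    linear_combination (s - x) * hr + (x - r) * hs
  exact sub_eq_zero.1 ((mul_eq_zero.1 key).resolve_left (sub_ne_zero.2 hrs.symm))

lemma sq_mul_norm_pt_sub_sq_sub_norm_pt_sub_sq (α x : ℝ) (xP xE : E2) :
    α ^ 2 * ‖pt x 0 - xP‖ ^ 2 - ‖pt x 0 - xE‖ ^ 2
      = (α ^ 2 - 1) * x * x + 2 * (xE 0 - α ^ 2 * xP 0) * x
        + (α ^ 2 * (xP 0 ^ 2 + xP 1 ^ 2) - (xE 0 ^ 2 + xE 1 ^ 2)) := by
  rw [norm_pt_sub_sq, norm_pt_sub_sq]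
  ring

theorem sign_of_G1_general
    (α : ℝ) (hα0 : 0 < α) (hα1 : α < 1)
    (xP xE : E2)
    (c₁ c₂ : ℝ) (hc : c₁ < c₂)
    (hcirc : {z : E2 | ‖z - xE‖ = α * ‖z - xP‖} ∩ {z : E2 | z 1 = 0}
      = {pt c₁ 0, pt c₂ 0})
    (G₁ : ℝ → ℝ)
    (hG : ∀ x, G₁ x = ‖pt x 0 - xP‖ - ‖pt x 0 - xE‖ / α) :
    G₁ c₁ = 0 ∧ G₁ c₂ = 0 ∧
      (∀ x, c₁ < x → x < c₂ → 0 < G₁ x) ∧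
      (∀ x, x < c₁ ∨ c₂ < x → G₁ x < 0) := by
  have hroot : ∀ c, pt c 0 ∈ ({pt c₁ 0, pt c₂ 0} : Set E2) →
      α ^ 2 * ‖pt c 0 - xP‖ ^ 2 - ‖pt c 0 - xE‖ ^ 2 = 0 := by
    intro c hc
    rw [← hcirc] at hc
    rw [hc.1]
    ring
  have hfactor : ∀ x, α ^ 2 * ‖pt x 0 - xP‖ ^ 2 - ‖pt x 0 - xE‖ ^ 2
      = (1 - α ^ 2) * ((x - c₁) * (c₂ - x)) := by
    intro x
    simp only [sq_mul_norm_pt_sub_sq_sub_norm_pt_sub_sq] at hroot ⊢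
    rw [quadratic_eq_mul_sub_mul_sub hc.ne (hroot c₁ (by simp)) (hroot c₂ (by simp))]
    ring
  have hsign : ∀ x, SignType.sign (G₁ x) = SignType.sign ((x - c₁) * (c₂ - x)) := by
    intro x
    rw [hG, sign_sub_div_eq_sign_sq_sub_sq hα0 (norm_nonneg _) (norm_nonneg _), hfactor,
      sign_mul, sign_pos (by nlinarith : (0 : ℝ) < 1 - α ^ 2), one_mul]
  refine ⟨by simpa using hsign c₁, by simpa using hsign c₂, fun x h₁ h₂ => ?_, fun x hx => ?_⟩
  · rw [← sign_eq_one_iff, hsign, sign_eq_one_iff]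
    exact mul_pos (by linarith) (by linarith)
  · rw [← sign_eq_neg_one_iff, hsign, sign_eq_neg_one_iff]
    rcases hx with h | h
    · exact mul_neg_of_neg_of_pos (by linarith) (by linarith)
    · exact mul_neg_of_pos_of_neg (by linarith) (by linarith)

theorem sign_of_G1
    (α : ℝ) (hα0 : 0 < α) (hα1 : α < 1)
    (xP xE : E2) (hyE : xE 1 < 0)
    (c₁ c₂ : ℝ) (hc : c₁ < c₂)
    (hcirc : {z : E2 | ‖z - xE‖ = α * ‖z - xP‖} ∩ {z : E2 | z 1 = 0}
      = {pt c₁ 0, pt c₂ 0})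
    (G₁ : ℝ → ℝ)
    (hG : ∀ x, G₁ x = ‖pt x 0 - xP‖ - ‖pt x 0 - xE‖ / α) :
    G₁ c₁ = 0 ∧ G₁ c₂ = 0 ∧
      (∀ x, c₁ < x → x < c₂ → 0 < G₁ x) ∧
      (∀ x, x < c₁ ∨ c₂ < x → G₁ x < 0) :=
  sign_of_G1_general α hα0 hα1 xP xE c₁ c₂ hc hcirc G₁ hG
end

section
/- Let 0 < α < 1, and let x_P = (x₁, y₁), x_E = (x₂, y₂) with y₂ < 0 and x₁ ≤ x₂. If x* ∈ ℝ satisfies both (x* − x₁)/‖(x*,0) − x_P‖ = (x* − x₂)/(α‖(x*,0) − x_E‖) and ‖(x*,0) − x_P‖ ≥ ‖(x*,0) − x_E‖/α, then x* ≥ x₂. Moreover, if x₁ < x₂ then x* > x₂, and if x₁ = x₂ then x* = x₂. -/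
theorem eq_zero_of_mul_eq_mul_of_ne {M₀ : Type*} [MulZeroClass M₀] [IsLeftCancelMulZero M₀]
    {a b c p : M₀} (hab : a = b) (hcp : c ≠ p) (h : a * c = b * p) : b = 0 :=
  (mul_eq_mul_left_iff.mp (hab ▸ h)).resolve_left hcp

section WeightedBalance

variable {K : Type*} [Field K] [LinearOrder K] [IsStrictOrderedRing K] {a b c p : K}

theorem mul_lt_of_div_le_of_lt_one {α q : K} (hα0 : 0 < α) (hα1 : α < 1) (hq : 0 < q)
    (h : q / α ≤ p) : α * q < p :=
  calc α * q < q := mul_lt_of_lt_one_left hq hα1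
    _ ≤ q / α := le_div_self hq.le hα0 hα1.le
    _ ≤ p := h

theorem nonneg_of_mul_eq_mul_of_lt (hc : 0 < c) (hcp : c < p) (hba : b ≤ a)
    (h : a * c = b * p) : 0 ≤ b := by
  by_contra! hb
  have : b * p < a * c :=
    calc b * p < b * c := mul_lt_mul_of_neg_left hcp hb
      _ ≤ a * c := mul_le_mul_of_nonneg_right hba hc.le
  exact this.ne' h

theorem pos_of_mul_eq_mul_of_lt (hc : 0 < c) (hcp : c < p) (hba : b < a)
    (h : a * c = b * p) : 0 < b := by
  refine (nonneg_of_mul_eq_mul_of_lt hc hcp hba.le h).lt_of_ne ?_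
  rintro rfl
  rw [zero_mul] at h
  exact (mul_pos hba hc).ne' h

end WeightedBalance

theorem stationary_point_location_general
    (α : ℝ) (hα0 : 0 < α) (hα1 : α < 1)
    (x₁ y₁ x₂ y₂ : ℝ) (hx : x₁ ≤ x₂)
    (xstar : ℝ)
    (hP : pt xstar 0 ≠ pt x₁ y₁) (hE : pt xstar 0 ≠ pt x₂ y₂)
    (hstat : (xstar - x₁) / ‖pt xstar 0 - pt x₁ y₁‖
      = (xstar - x₂) / (α * ‖pt xstar 0 - pt x₂ y₂‖))
    (hineq : ‖pt xstar 0 - pt x₁ y₁‖ ≥ ‖pt xstar 0 - pt x₂ y₂‖ / α) :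
    x₂ ≤ xstar ∧ (x₁ < x₂ → x₂ < xstar) ∧ (x₁ = x₂ → xstar = x₂) := by
  have hdE : 0 < ‖pt xstar 0 - pt x₂ y₂‖ := norm_sub_pos_iff.mpr hE
  have hq : 0 < α * ‖pt xstar 0 - pt x₂ y₂‖ := mul_pos hα0 hdE
  have hcross := (div_eq_div_iff (norm_sub_pos_iff.mpr hP).ne' hq.ne').mp hstat
  have hlt := mul_lt_of_div_le_of_lt_one hα0 hα1 hdE hineq
  refine ⟨sub_nonneg.mp (nonneg_of_mul_eq_mul_of_lt hq hlt (by linarith) hcross),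
    fun h => sub_pos.mp (pos_of_mul_eq_mul_of_lt hq hlt (by linarith) hcross), fun h =>
    sub_eq_zero.mp (eq_zero_of_mul_eq_mul_of_ne (by rw [h]) hlt.ne hcross)⟩

theorem stationary_point_location
    (α : ℝ) (hα0 : 0 < α) (hα1 : α < 1)
    (x₁ y₁ x₂ y₂ : ℝ) (hy₂ : y₂ < 0) (hx : x₁ ≤ x₂)
    (xstar : ℝ)
    (hP : pt xstar 0 ≠ pt x₁ y₁) (hE : pt xstar 0 ≠ pt x₂ y₂)
    (hstat : (xstar - x₁) / ‖pt xstar 0 - pt x₁ y₁‖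
      = (xstar - x₂) / (α * ‖pt xstar 0 - pt x₂ y₂‖))
    (hineq : ‖pt xstar 0 - pt x₁ y₁‖ ≥ ‖pt xstar 0 - pt x₂ y₂‖ / α) :
    x₂ ≤ xstar ∧ (x₁ < x₂ → x₂ < xstar) ∧ (x₁ = x₂ → xstar = x₂) :=
  stationary_point_location_general α hα0 hα1 x₁ y₁ x₂ y₂ hx xstar hP hE hstat hineq
end

section
/- Suppose a point p* = (x*, 0) satisfies simultaneously the stationarity condition α²(x* − x_P¹) = x* − x_E¹ and the zero-payoff condition ‖p* − x_E‖ = α‖p* − x_P‖. Then the initial positions satisfy (x_E¹ − x_P¹)² + (1 − 1/α²)(y_E)² + (1 − α²)(y_P)² = 0, where x_P = (x_P¹, y_P) and x_E = (x_E¹, y_E). -/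
lemma norm_pt_sub_pt_sq (a b c d : ℝ) :
    ‖pt a b - pt c d‖ ^ 2 = (a - c) ^ 2 + (b - d) ^ 2 := by
  rw [EuclideanSpace.norm_eq, Real.sq_sqrt (by positivity)]
  simp [pt, Fin.sum_univ_two, sq_abs]

lemma barrier_relation_of_sq {α xP1 yP xE1 yE x : ℝ} (hα : α ≠ 0)
    (hstat : α ^ 2 * (x - xP1) = x - xE1)
    (hsq : (x - xE1) ^ 2 + yE ^ 2 = α ^ 2 * ((x - xP1) ^ 2 + yP ^ 2)) :
    (xE1 - xP1) ^ 2 + (1 - 1 / α ^ 2) * yE ^ 2 + (1 - α ^ 2) * yP ^ 2 = 0 := by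
  field_simp
  -- α² times the claimed expression is (α² - 1)·(hsq) plus the square (α²(x - xP1) - (x - xE1))²,
  -- which vanishes by stationarity.
  linear_combination (α ^ 2 - 1) * hsq + (α ^ 2 * (x - xP1) - (x - xE1)) * hstat

theorem barrier_relation_of_initial_positions_general
    (α : ℝ) (hα0 : 0 < α)
    (xP1 yP xE1 yE xstar : ℝ)
    (hstat : α ^ 2 * (xstar - xP1) = xstar - xE1)
    (hzero : ‖pt xstar 0 - pt xE1 yE‖ = α * ‖pt xstar 0 - pt xP1 yP‖) :
    (xE1 - xP1) ^ 2 + (1 - 1 / α ^ 2) * yE ^ 2 + (1 - α ^ 2) * yP ^ 2 = 0 := by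
  have hsq := congrArg (· ^ 2) hzero
  simp only [mul_pow, norm_pt_sub_pt_sq, zero_sub, neg_sq] at hsq
  exact barrier_relation_of_sq hα0.ne' hstat hsq

theorem barrier_relation_of_initial_positions
    (α : ℝ) (hα0 : 0 < α) (hα1 : α < 1)
    (xP1 yP xE1 yE xstar : ℝ)
    (hstat : α ^ 2 * (xstar - xP1) = xstar - xE1)
    (hzero : ‖pt xstar 0 - pt xE1 yE‖ = α * ‖pt xstar 0 - pt xP1 yP‖) :
    (xE1 - xP1) ^ 2 + (1 - 1 / α ^ 2) * yE ^ 2 + (1 - α ^ 2) * yP ^ 2 = 0 :=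
  barrier_relation_of_initial_positions_general α hα0 xP1 yP xE1 yE xstar hstat hzero
end
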